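/- arXiv:1912.00457 — 13 statements merged into one kernel-verified Lean document; each statement's English description precedes it below -/
import Mathlib

section
/- Let m, n ≥ 3 and let f : ZMod m × ZMod n → Fin 5 satisfy: |f(i+1,j) - f(i,j)| ≥ 2, |f(i,j+1) - f(i,j)| ≥ 2, f(i+2,j) ≠ f(i,j), f(i,j+2) ≠ f(i,j), and f(i+1,j+1) ≠ f(i,j) for all i, j. Then f(i,j) = f(i+1, j-1) for all i, j. -/
/-!
Fix `(i, j)` and look at the six vertices `(i, j-2)`, `(i, j-1)`, `(i, j)`, `(i+1, j-1)`,
`(i+1, j)`, `(i+2, j)`. If `c = f (i, j)` and `d = f (i+1, j-1)` were different, the two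
distinct values `f (i, j-1)` and `f (i+1, j)` would both be far from `c` and `d`, and each would
have a far neighbour (`f (i, j-2)`, resp. `f (i+2, j)`) outside `{c, d}`. In `{0, …, 4}` this is
impossible: two distinct values have at most two common far values, and when they have two
(`{0, 1}` and `{3, 4}`, or the other way round) one of them is far from nothing but `c` and `d`.
-/

def Fin.IsFar {k : ℕ} (a b : Fin k) : Prop := 2 ≤ |((a : ℕ) : ℤ) - ((b : ℕ) : ℤ)|

theorem Fin.eq_of_two_common_far_neighbours {a b c d e g : Fin 5}
    (hba : b.IsFar a) (hcb : c.IsFar b) (hdb : d.IsFar b) (hec : e.IsFar c) (hed : e.IsFar d)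
    (hge : g.IsFar e) (heb : e ≠ b) (hca : c ≠ a) (hda : d ≠ a) (hgc : g ≠ c) (hgd : g ≠ d) :
    c = d := by
  simp only [Fin.IsFar, le_abs, ne_eq, Fin.ext_iff] at *
  omega

theorem stmt_1_general (m n : ℕ)
    (f : ZMod m × ZMod n → Fin 5)
    (h1 : ∀ i : ZMod m, ∀ j : ZMod n,
      (2 : ℤ) ≤ |((f (i + 1, j) : ℕ) : ℤ) - ((f (i, j) : ℕ) : ℤ)|)
    (h2 : ∀ i : ZMod m, ∀ j : ZMod n,
      (2 : ℤ) ≤ |((f (i, j + 1) : ℕ) : ℤ) - ((f (i, j) : ℕ) : ℤ)|)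
    (h3 : ∀ i : ZMod m, ∀ j : ZMod n, f (i + 2, j) ≠ f (i, j))
    (h4 : ∀ i : ZMod m, ∀ j : ZMod n, f (i, j + 2) ≠ f (i, j))
    (h5 : ∀ i : ZMod m, ∀ j : ZMod n, f (i + 1, j + 1) ≠ f (i, j)) :
    ∀ i : ZMod m, ∀ j : ZMod n, f (i, j) = f (i + 1, j - 1) := by
  intro i j
  obtain ⟨k, rfl⟩ : ∃ k, j = k + 2 := ⟨j - 2, by ring⟩
  have hcb := h2 i (k + 1)
  have hed := h2 (i + 1) (k + 1)
  have hge := h1 (i + 1) (k + 2)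
  have heb := h5 i (k + 1)
  have hgd := h5 (i + 1) (k + 1)
  simp only [add_assoc, one_add_one_eq_two] at hcb hed hge heb hgd
  rw [show k + 2 - 1 = k + 1 by ring]
  exact Fin.eq_of_two_common_far_neighbours (h2 i k) hcb (h1 i (k + 1)) (h1 i (k + 2)) hed
    hge heb (h4 i k) (h5 i k) (h3 i (k + 2)) hgd

theorem stmt_1 (m n : ℕ) (hm : 3 ≤ m) (hn : 3 ≤ n)
    (f : ZMod m × ZMod n → Fin 5)
    (h1 : ∀ i : ZMod m, ∀ j : ZMod n,
      (2 : ℤ) ≤ |((f (i + 1, j) : ℕ) : ℤ) - ((f (i, j) : ℕ) : ℤ)|)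
    (h2 : ∀ i : ZMod m, ∀ j : ZMod n,
      (2 : ℤ) ≤ |((f (i, j + 1) : ℕ) : ℤ) - ((f (i, j) : ℕ) : ℤ)|)
    (h3 : ∀ i : ZMod m, ∀ j : ZMod n, f (i + 2, j) ≠ f (i, j))
    (h4 : ∀ i : ZMod m, ∀ j : ZMod n, f (i, j + 2) ≠ f (i, j))
    (h5 : ∀ i : ZMod m, ∀ j : ZMod n, f (i + 1, j + 1) ≠ f (i, j)) :
    ∀ i : ZMod m, ∀ j : ZMod n, f (i, j) = f (i + 1, j - 1) :=
  stmt_1_general m n f h1 h2 h3 h4 h5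
end

section
/- If m, n ≥ 3 and d = gcd(m,n) divides both m and n with d ≥ 3, and there exists a 4-L(2,1)-labeling g : ZMod d → Fin 5 of the oriented cycle C_d, then the function f : ZMod m × ZMod n → Fin 5 defined by f(i,j) = g((i.val + j.val : ℤ) mod d) is a 4-L(2,1)-labeling of C_m □ C_n. -/
/-! Since `d` divides `m` and `n`, reduction mod `d` is a ring homomorphism on `ZMod m` and on
`ZMod n`, so `f (i, j) = g (φ i + ψ j)` for ring homomorphisms `φ`, `ψ`. Each of the five torus
constraints at `(i, j)` is then a cycle constraint of `g` at `φ i + ψ j`, with shift `1` or `2`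
(the diagonal neighbour `(i + 1, j + 1)` becomes a shift by `2`). -/

section

variable {A B : Type*} [AddMonoidWithOne A] [AddMonoidWithOne B]

def IsCycleL21Labeling (g : A → Fin 5) : Prop :=
  (∀ i : A, (2 : ℤ) ≤ |((g (i + 1) : ℕ) : ℤ) - ((g i : ℕ) : ℤ)|) ∧ ∀ i : A, g (i + 2) ≠ g i

def IsTorusL21Labeling (f : A × B → Fin 5) : Prop :=
  (∀ i : A, ∀ j : B, (2 : ℤ) ≤ |((f (i + 1, j) : ℕ) : ℤ) - ((f (i, j) : ℕ) : ℤ)|) ∧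
  (∀ i : A, ∀ j : B, (2 : ℤ) ≤ |((f (i, j + 1) : ℕ) : ℤ) - ((f (i, j) : ℕ) : ℤ)|) ∧
  (∀ i : A, ∀ j : B, f (i + 2, j) ≠ f (i, j)) ∧
  (∀ i : A, ∀ j : B, f (i, j + 2) ≠ f (i, j)) ∧
  (∀ i : A, ∀ j : B, f (i + 1, j + 1) ≠ f (i, j))

end

theorem IsCycleL21Labeling.isTorusL21Labeling_comp_add {R S T : Type*} [NonAssocSemiring R]
    [NonAssocSemiring S] [NonAssocSemiring T] {g : T → Fin 5} (hg : IsCycleL21Labeling g)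
    (φ : R →+* T) (ψ : S →+* T) :
    IsTorusL21Labeling fun p : R × S => g (φ p.1 + ψ p.2) := by
  obtain ⟨hg1, hg2⟩ := hg
  refine ⟨fun i j => ?_, fun i j => ?_, fun i j => ?_, fun i j => ?_, fun i j => ?_⟩
  · simpa only [map_add, map_one, add_right_comm] using hg1 (φ i + ψ j)
  · simpa only [map_add, map_one, add_assoc] using hg1 (φ i + ψ j)
  · simpa only [map_add, map_ofNat, add_right_comm] using hg2 (φ i + ψ j)
  · simpa only [map_add, map_ofNat, add_assoc] using hg2 (φ i + ψ j)
  · simp only [map_add, map_one]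
    rw [add_add_add_comm, one_add_one_eq_two]
    exact hg2 _

theorem ZMod.intCast_val_add_val_emod {m n d : ℕ} [NeZero m] [NeZero n] (hdm : d ∣ m)
    (hdn : d ∣ n) (i : ZMod m) (j : ZMod n) :
    (((i.val + j.val : ℤ) % d : ℤ) : ZMod d) = castHom hdm (ZMod d) i + castHom hdn (ZMod d) j := by
  simp only [ZMod.intCast_mod, castHom_apply, cast_eq_val]
  push_cast
  rfl

theorem stmt_2_general (m n d : ℕ) (hm : 3 ≤ m) (hn : 3 ≤ n)
    (hd : d = Nat.gcd m n)
    (g : ZMod d → Fin 5)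
    (hg1 : ∀ i : ZMod d, (2 : ℤ) ≤ |((g (i + 1) : ℕ) : ℤ) - ((g i : ℕ) : ℤ)|)
    (hg2 : ∀ i : ZMod d, g (i + 2) ≠ g i)
    (f : ZMod m × ZMod n → Fin 5)
    (hf : ∀ i : ZMod m, ∀ j : ZMod n,
      f (i, j) = g ((((i.val : ℤ) + (j.val : ℤ)) % (d : ℤ) : ℤ)) ) :
    (∀ i : ZMod m, ∀ j : ZMod n,
      (2 : ℤ) ≤ |((f (i + 1, j) : ℕ) : ℤ) - ((f (i, j) : ℕ) : ℤ)|) ∧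
    (∀ i : ZMod m, ∀ j : ZMod n,
      (2 : ℤ) ≤ |((f (i, j + 1) : ℕ) : ℤ) - ((f (i, j) : ℕ) : ℤ)|) ∧
    (∀ i : ZMod m, ∀ j : ZMod n, f (i + 2, j) ≠ f (i, j)) ∧
    (∀ i : ZMod m, ∀ j : ZMod n, f (i, j + 2) ≠ f (i, j)) ∧
    (∀ i : ZMod m, ∀ j : ZMod n, f (i + 1, j + 1) ≠ f (i, j)) := by
  have : NeZero m := ⟨by omega⟩
  have : NeZero n := ⟨by omega⟩
  have hdm : d ∣ m := hd ▸ Nat.gcd_dvd_left m n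
  have hdn : d ∣ n := hd ▸ Nat.gcd_dvd_right m n
  have hf' : f = fun p => g (ZMod.castHom hdm (ZMod d) p.1 + ZMod.castHom hdn (ZMod d) p.2) := by
    funext ⟨i, j⟩
    rw [hf, ZMod.intCast_val_add_val_emod]
  rw [hf']
  exact IsCycleL21Labeling.isTorusL21Labeling_comp_add ⟨hg1, hg2⟩ _ _

theorem stmt_2 (m n d : ℕ) (hm : 3 ≤ m) (hn : 3 ≤ n)
    (hd : d = Nat.gcd m n) (hd3 : 3 ≤ d)
    (g : ZMod d → Fin 5)
    (hg1 : ∀ i : ZMod d, (2 : ℤ) ≤ |((g (i + 1) : ℕ) : ℤ) - ((g i : ℕ) : ℤ)|)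
    (hg2 : ∀ i : ZMod d, g (i + 2) ≠ g i)
    (f : ZMod m × ZMod n → Fin 5)
    (hf : ∀ i : ZMod m, ∀ j : ZMod n,
      f (i, j) = g ((((i.val : ℤ) + (j.val : ℤ)) % (d : ℤ) : ℤ)) ) :
    (∀ i : ZMod m, ∀ j : ZMod n,
      (2 : ℤ) ≤ |((f (i + 1, j) : ℕ) : ℤ) - ((f (i, j) : ℕ) : ℤ)|) ∧
    (∀ i : ZMod m, ∀ j : ZMod n,
      (2 : ℤ) ≤ |((f (i, j + 1) : ℕ) : ℤ) - ((f (i, j) : ℕ) : ℤ)|) ∧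
    (∀ i : ZMod m, ∀ j : ZMod n, f (i + 2, j) ≠ f (i, j)) ∧
    (∀ i : ZMod m, ∀ j : ZMod n, f (i, j + 2) ≠ f (i, j)) ∧
    (∀ i : ZMod m, ∀ j : ZMod n, f (i + 1, j + 1) ≠ f (i, j)) :=
  stmt_2_general m n d hm hn hd g hg1 hg2 f hf
end

section
/- Suppose gcd(m,n) ∈ {1,2} with m, n ≥ 3 and m ≠ n. Then there is no function f : ZMod m × ZMod n → Fin 5 satisfying the 4-L(2,1)-labeling conditions of C_m □ C_n. -/
/-! Each of the labels 1, 2, 3 is at distance at least 2 from only two labels, so a vertex whose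
three neighbours carry distinct labels is labelled 0 or 4. If `f (i, j + 1) ≠ f (i + 1, j)`, this
applies to both `(i, j)` and `(i + 1, j + 1)`, whose labels differ; they are therefore 0 and 4, and
the common neighbours `(i, j + 1)`, `(i + 1, j)` must both be labelled 2, a contradiction.
Hence `f` is constant on anti-diagonals, so `f (i, j + m) = f (i + m, j) = f (i, j)`: the second
coordinate has period `m`, hence period `gcd m n ∈ {1, 2}`, which the labeling conditions forbid. -/

def Far (x y : Fin 5) : Prop := 2 ≤ |((x : ℕ) : ℤ) - ((y : ℕ) : ℤ)|

instance : DecidableRel Far := fun _ _ => Int.decLe _ _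

theorem Far.symm {x y : Fin 5} (h : Far x y) : Far y x := by
  rwa [Far, abs_sub_comm]

theorem Far.ne {x y : Fin 5} (h : Far x y) : x ≠ y := by
  rintro rfl
  simp [Far] at h

theorem eq_zero_or_eq_four_of_far {c x y z : Fin 5} (hx : Far x c) (hy : Far y c)
    (hz : Far z c) (hxy : x ≠ y) (hxz : x ≠ z) (hyz : y ≠ z) : c = 0 ∨ c = 4 := by
  revert c x y z
  decide

theorem eq_two_of_far {a d x : Fin 5} (ha : a = 0 ∨ a = 4) (hd : d = 0 ∨ d = 4) (had : a ≠ d)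
    (hxa : Far x a) (hxd : Far x d) : x = 2 := by
  revert a d x
  decide

structure IsL21Labeling {R S : Type*} [AddCommGroupWithOne R] [AddCommGroupWithOne S]
    (f : R × S → Fin 5) : Prop where
  far_fst : ∀ i j, Far (f (i + 1, j)) (f (i, j))
  far_snd : ∀ i j, Far (f (i, j + 1)) (f (i, j))
  ne_fst_two : ∀ i j, f (i + 2, j) ≠ f (i, j)
  ne_snd_two : ∀ i j, f (i, j + 2) ≠ f (i, j)
  ne_diag : ∀ i j, f (i + 1, j + 1) ≠ f (i, j)

namespace IsL21Labeling

variable {R S : Type*} [AddCommGroupWithOne R] [AddCommGroupWithOne S] {f : R × S → Fin 5}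

theorem apply_eq_zero_or_eq_four (hf : IsL21Labeling f) {i : R} {j : S}
    (hne : f (i, j + 1) ≠ f (i + 1, j)) : f (i, j) = 0 ∨ f (i, j) = 4 := by
  have hS : Far (f (i, j)) (f (i, j - 1)) := by simpa using hf.far_snd i (j - 1)
  have hNS : f (i, j + 1) ≠ f (i, j - 1) := by
    simpa [← one_add_one_eq_two, ← add_assoc] using hf.ne_snd_two i (j - 1)
  have hES : f (i + 1, j) ≠ f (i, j - 1) := by simpa using hf.ne_diag i (j - 1)
  exact eq_zero_or_eq_four_of_far (hf.far_snd i j) (hf.far_fst i j) hS.symm hne hNS hES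

theorem apply_add_one_add_one_eq_zero_or_eq_four (hf : IsL21Labeling f) {i : R} {j : S}
    (hne : f (i, j + 1) ≠ f (i + 1, j)) :
    f (i + 1, j + 1) = 0 ∨ f (i + 1, j + 1) = 4 := by
  have hN : Far (f (i + 1, j + 1 + 1)) (f (i + 1, j + 1)) := hf.far_snd (i + 1) (j + 1)
  have hNW : f (i + 1, j + 1 + 1) ≠ f (i, j + 1) := hf.ne_diag i (j + 1)
  have hNS : f (i + 1, j + 1 + 1) ≠ f (i + 1, j) := by
    simpa [add_assoc, one_add_one_eq_two] using hf.ne_snd_two (i + 1) j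
  exact eq_zero_or_eq_four_of_far hN (hf.far_fst i (j + 1)).symm (hf.far_snd (i + 1) j).symm
    hNW hNS hne

theorem apply_add_one_snd (hf : IsL21Labeling f) (i : R) (j : S) :
    f (i, j + 1) = f (i + 1, j) := by
  by_contra hne
  have hN := eq_two_of_far (hf.apply_eq_zero_or_eq_four hne)
    (hf.apply_add_one_add_one_eq_zero_or_eq_four hne) (hf.ne_diag i j).symm
    (hf.far_snd i j) (hf.far_fst i (j + 1)).symm
  have hE := eq_two_of_far (hf.apply_eq_zero_or_eq_four hne)
    (hf.apply_add_one_add_one_eq_zero_or_eq_four hne) (hf.ne_diag i j).symm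
    (hf.far_fst i j) (hf.far_snd (i + 1) j).symm
  exact hne (hN.trans hE.symm)

theorem apply_add_natCast_snd (hf : IsL21Labeling f) (k : ℕ) (i : R) (j : S) :
    f (i, j + k) = f (i + k, j) := by
  induction k generalizing j with
  | zero => simp
  | succ k ih =>
    rw [Nat.cast_succ, Nat.cast_succ, add_comm (k : S), ← add_assoc, ih, hf.apply_add_one_snd,
      add_assoc]

theorem periodic_snd (hf : IsL21Labeling f) {k : ℕ} (hk : (k : R) = 0) (i : R) :
    Function.Periodic (fun j => f (i, j)) (k : S) := fun j => by
  simp only [hf.apply_add_natCast_snd, hk, add_zero]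

end IsL21Labeling

theorem Function.Periodic.natCast_gcd {α : Type*} {m n : ℕ} {g : ZMod n → α}
    (hg : Function.Periodic g (m : ZMod n)) : Function.Periodic g (Nat.gcd m n : ZMod n) := by
  have hbezout : ((Nat.gcdA m n * m : ℤ) : ZMod n) = ((Nat.gcd m n : ℤ) : ZMod n) :=
    (ZMod.intCast_eq_intCast_iff _ _ _).2 (by simpa [mul_comm] using Int.gcd_a_modEq m n)
  push_cast at hbezout
  rw [← hbezout]
  exact hg.int_mul _

theorem stmt_3_general (m n : ℕ)
    (hgcd : Nat.gcd m n = 1 ∨ Nat.gcd m n = 2) :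
    ¬ ∃ f : ZMod m × ZMod n → Fin 5,
      (∀ i : ZMod m, ∀ j : ZMod n,
        (2 : ℤ) ≤ |((f (i + 1, j) : ℕ) : ℤ) - ((f (i, j) : ℕ) : ℤ)|) ∧
      (∀ i : ZMod m, ∀ j : ZMod n,
        (2 : ℤ) ≤ |((f (i, j + 1) : ℕ) : ℤ) - ((f (i, j) : ℕ) : ℤ)|) ∧
      (∀ i : ZMod m, ∀ j : ZMod n, f (i + 2, j) ≠ f (i, j)) ∧
      (∀ i : ZMod m, ∀ j : ZMod n, f (i, j + 2) ≠ f (i, j)) ∧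
      (∀ i : ZMod m, ∀ j : ZMod n, f (i + 1, j + 1) ≠ f (i, j)) := by
  rintro ⟨f, far_fst, far_snd, ne_fst_two, ne_snd_two, ne_diag⟩
  have hf : IsL21Labeling f := ⟨far_fst, far_snd, ne_fst_two, ne_snd_two, ne_diag⟩
  have hper : Function.Periodic (fun j => f (0, j)) (Nat.gcd m n : ZMod n) :=
    (hf.periodic_snd (ZMod.natCast_self m) 0).natCast_gcd
  rcases hgcd with hgcd | hgcd <;> rw [hgcd] at hper
  · exact (hf.far_snd 0 0).ne (by simpa using hper 0)
  · exact hf.ne_snd_two 0 0 (by simpa using hper 0)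

theorem stmt_3 (m n : ℕ) (hm : 3 ≤ m) (hn : 3 ≤ n) (hmn : m ≠ n)
    (hgcd : Nat.gcd m n = 1 ∨ Nat.gcd m n = 2) :
    ¬ ∃ f : ZMod m × ZMod n → Fin 5,
      (∀ i : ZMod m, ∀ j : ZMod n,
        (2 : ℤ) ≤ |((f (i + 1, j) : ℕ) : ℤ) - ((f (i, j) : ℕ) : ℤ)|) ∧
      (∀ i : ZMod m, ∀ j : ZMod n,
        (2 : ℤ) ≤ |((f (i, j + 1) : ℕ) : ℤ) - ((f (i, j) : ℕ) : ℤ)|) ∧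
      (∀ i : ZMod m, ∀ j : ZMod n, f (i + 2, j) ≠ f (i, j)) ∧
      (∀ i : ZMod m, ∀ j : ZMod n, f (i, j + 2) ≠ f (i, j)) ∧
      (∀ i : ZMod m, ∀ j : ZMod n, f (i + 1, j + 1) ≠ f (i, j)) :=
  stmt_3_general m n hgcd
end

section
/- If 7 divides m and 7 divides n (m, n ≥ 3), then the function f : ZMod m × ZMod n → Fin 7 defined by f(i,j) = g((i.val + j.val) mod 7), where g maps residues 2,3,4,5,6,0,1 to 0,2,4,6,1,3,5 respectively, is a 6-L(2,1)-labeling of the strong product C_m ⊠ C_n. -/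
/-!
Read in `ZMod 7`, the labelling is `f (i, j) = 2 (i + j) + 3`, where `i + j` makes sense modulo 7
because `7 ∣ m` and `7 ∣ n`. An edge increases `i + j` by 1 or 2, so it shifts the label by 2 or
4 modulo 7; two representatives in `{0, …, 6}` whose difference is `±2` or `±4` modulo 7 are at
distance at least 2. A path of length two increases `i + j` by 2, 3 or 4, which is nonzero modulo
7, so the label changes.
-/

theorem ZMod.two_le_abs_val_add_sub_val {n : ℕ} [NeZero n] (x d : ZMod n)
    (h0 : d ≠ 0) (h1 : d ≠ 1) (hneg1 : d ≠ -1) :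
    2 ≤ |((x + d).val : ℤ) - x.val| := by
  have hn : 1 < n := by
    by_contra! h
    obtain rfl : n = 1 := by have := NeZero.pos n; omega
    exact h0 (Subsingleton.elim _ _)
  have hd0 : d.val ≠ 0 := by rwa [Ne, ZMod.val_eq_zero]
  have hd1 : d.val ≠ 1 := by rwa [Ne, ZMod.val_eq_one hn]
  have hdn : n - d.val ≠ 1 := by
    have : (-d).val ≠ 1 := by rwa [Ne, ZMod.val_eq_one hn, neg_eq_iff_eq_neg]
    rwa [ZMod.neg_val, if_neg h0] at this
  have hx := x.val_lt
  have hd := d.val_lt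
  rw [ZMod.val_add, le_abs]
  rcases lt_or_ge (x.val + d.val) n with h | h
  · rw [Nat.mod_eq_of_lt h]; omega
  · rw [Nat.mod_eq_sub_mod h, Nat.mod_eq_of_lt (by omega)]; omega

theorem two_mul_add_three_eq_label (t : ZMod 7) :
    2 * t + 3 = ![(3 : Fin 7), 5, 0, 2, 4, 6, 1] t := by
  fin_cases t <;> rfl

theorem stmt_7 (m n : ℕ) (hm : 3 ≤ m) (hn : 3 ≤ n)
    (h7m : 7 ∣ m) (h7n : 7 ∣ n)
    (f : ZMod m × ZMod n → Fin 7)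
    (hf : ∀ i : ZMod m, ∀ j : ZMod n,
      f (i, j) = ![(3 : Fin 7), 5, 0, 2, 4, 6, 1]
        ⟨(i.val + j.val) % 7, Nat.mod_lt _ (by norm_num)⟩) :
    (∀ i : ZMod m, ∀ j : ZMod n,
      ∀ ab : ZMod m × ZMod n, ab ∈ [((1 : ZMod m), (0 : ZMod n)), (0, 1), (1, 1)] →
        (2 : ℤ) ≤ |((f (i + ab.1, j + ab.2) : ℕ) : ℤ) - ((f (i, j) : ℕ) : ℤ)|) ∧
    (∀ i : ZMod m, ∀ j : ZMod n,
      ∀ ab : ZMod m × ZMod n,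
        ab ∈ [((2 : ZMod m), (0 : ZMod n)), (0, 2), (2, 1), (1, 2), (2, 2)] →
        f (i + ab.1, j + ab.2) ≠ f (i, j)) := by
  have : NeZero m := ⟨by omega⟩
  have : NeZero n := ⟨by omega⟩
  -- `Fin 7` and `ZMod 7` are the same type, but only `ZMod 7` carries the ring structure.
  obtain ⟨F, rfl⟩ : ∃ F : ZMod m × ZMod n → ZMod 7, F = f := ⟨f, rfl⟩
  set φ := ZMod.castHom h7m (ZMod 7)
  set ψ := ZMod.castHom h7n (ZMod 7)
  have hF_affine (i : ZMod m) (j : ZMod n) : F (i, j) = 2 * (φ i + ψ j) + 3 := by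
    simp only [hf, φ, ψ, ZMod.castHom_apply, ZMod.cast_eq_val, ← Nat.cast_add,
      two_mul_add_three_eq_label]
    exact congrArg _ (Fin.ext (ZMod.val_natCast 7 _).symm)
  have hF_shift (i : ZMod m) (j : ZMod n) (a : ZMod m) (b : ZMod n) :
      F (i + a, j + b) = F (i, j) + 2 * (φ a + ψ b) := by
    rw [hF_affine, hF_affine, map_add, map_add]; ring
  refine ⟨fun i j ab hab => ?_, fun i j ab hab => ?_⟩
  · rw [hF_shift]
    refine ZMod.two_le_abs_val_add_sub_val (F (i, j)) _ ?_ ?_ ?_ <;>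
      fin_cases hab <;> simp only [map_zero, map_one] <;> decide
  · rw [hF_shift]
    refine add_ne_left.mpr ?_
    fin_cases hab <;> simp only [map_zero, map_one, map_ofNat] <;> decide
end

section
/- Let d ≥ 5 and let c : ZMod d → Fin 7 satisfy: |c(i+1)-c(i)| ≥ 2, |c(i+2)-c(i)| ≥ 2, c(i+3) ≠ c(i), and c(i+4) ≠ c(i) for all i. Then 7 divides d. -/
/-!
Any five consecutive labels are pairwise distinct, and since there are only seven colours the
labelling is very rigid: an exhaustive enumeration of the admissible words of length 14 shows
that their letters 3 and 10 always coincide, so every such labelling of `ℤ` or of a cycle is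
7-periodic. On `ZMod d` with `7 ∤ d` the element 7 generates the group, so the labelling would
be constant, contradicting `|c (i + 1) - c i| ≥ 2`.
-/

open Function

structure IsL2211Labeling {G : Type*} [AddCommGroupWithOne G] (c : G → Fin 7) : Prop where
  far_one : ∀ i : G, (2 : ℤ) ≤ |((c (i + 1) : ℕ) : ℤ) - ((c i : ℕ) : ℤ)|
  far_two : ∀ i : G, (2 : ℤ) ≤ |((c (i + 2) : ℕ) : ℤ) - ((c i : ℕ) : ℤ)|
  ne_three : ∀ i : G, c (i + 3) ≠ c i
  ne_four : ∀ i : G, c (i + 4) ≠ c i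

namespace IsL2211Labeling

def FarApart (x y : Fin 7) : Prop := (2 : ℤ) ≤ |((y : ℕ) : ℤ) - ((x : ℕ) : ℤ)|

instance : DecidableRel FarApart := fun _ _ => Int.decLe _ _

lemma FarApart.ne {x y : Fin 7} (h : FarApart x y) : x ≠ y := by
  rintro rfl
  simp [FarApart] at h

def canPrepend (x : Fin 7) (w : List (Fin 7)) : Bool :=
  (w.take 2).all (fun y => FarApart x y) && (w.take 4).all (· != x)

def admissibleWords : ℕ → List (List (Fin 7))
  | 0 => [[]]
  | n + 1 => (admissibleWords n).flatMap fun w =>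
      ((List.finRange 7).filter (canPrepend · w)).map (· :: w)

lemma cons_mem_admissibleWords {n : ℕ} {x : Fin 7} {w : List (Fin 7)}
    (hw : w ∈ admissibleWords n) (hx : canPrepend x w) : x :: w ∈ admissibleWords (n + 1) := by
  simp only [admissibleWords, List.mem_flatMap, List.mem_map, List.mem_filter]
  exact ⟨w, hw, x, ⟨List.mem_finRange x, hx⟩, rfl⟩

-- 14 is the shortest length at which two letters 7 apart are forced to agree.
lemma getElem?_three_eq_getElem?_ten : ∀ w ∈ admissibleWords 14, w[3]? = w[10]? := by
  decide

variable {G : Type*} [AddCommGroupWithOne G]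

def window (c : G → Fin 7) (j : G) (n : ℕ) : List (Fin 7) :=
  (List.range n).map fun k : ℕ => c (j + k)

lemma window_succ (c : G → Fin 7) (j : G) (n : ℕ) :
    window c j (n + 1) = c j :: window c (j + 1) n := by
  simp only [window, List.range_succ_eq_map, List.map_cons, List.map_map, comp_def,
    Nat.cast_zero, add_zero, Nat.succ_eq_add_one, Nat.cast_add_one, ← add_assoc,
    add_right_comm _ _ (1 : G)]

lemma exists_of_mem_take_window {c : G → Fin 7} {j : G} {m n : ℕ} {y : Fin 7}
    (hy : y ∈ (window c j n).take m) : ∃ k : ℕ, k < m ∧ c (j + k) = y := by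
  simp only [window, ← List.map_take, List.take_range, List.mem_map, List.mem_range] at hy
  obtain ⟨k, hk, rfl⟩ := hy
  exact ⟨k, by omega, rfl⟩

variable {c : G → Fin 7}

lemma canPrepend_window (hc : IsL2211Labeling c) (j : G) (n : ℕ) :
    canPrepend (c j) (window c (j + 1) n) := by
  have hfar : ∀ k : ℕ, k < 2 → FarApart (c j) (c (j + 1 + k)) := by
    intro k hk
    unfold FarApart
    interval_cases k
    · simpa using hc.far_one j
    · simpa [add_assoc, one_add_one_eq_two] using hc.far_two j
  simp only [canPrepend, Bool.and_eq_true, List.all_eq_true, decide_eq_true_eq, bne_iff_ne]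
  refine ⟨fun y hy => ?_, fun y hy => ?_⟩
  · obtain ⟨k, hk, rfl⟩ := exists_of_mem_take_window hy
    exact hfar k hk
  · obtain ⟨k, hk, rfl⟩ := exists_of_mem_take_window hy
    interval_cases k
    · exact (hfar 0 (by norm_num)).ne.symm
    · exact (hfar 1 (by norm_num)).ne.symm
    · simpa [add_assoc, add_comm (1 : G), two_add_one_eq_three] using hc.ne_three j
    · simpa [add_assoc, add_comm (1 : G), three_add_one_eq_four] using hc.ne_four j

lemma window_mem_admissibleWords (hc : IsL2211Labeling c) (j : G) (n : ℕ) :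
    window c j n ∈ admissibleWords n := by
  induction n generalizing j with
  | zero => exact List.mem_singleton_self _
  | succ n ih =>
    rw [window_succ]
    exact cons_mem_admissibleWords (ih (j + 1)) (canPrepend_window hc j n)

theorem periodic (hc : IsL2211Labeling c) : Periodic c 7 := by
  intro x
  have h := getElem?_three_eq_getElem?_ten _ (window_mem_admissibleWords hc (x - 3) 14)
  simp only [window, List.length_map, List.length_range, Nat.reduceLT, getElem?_pos,
    List.getElem_map, List.getElem_range, Nat.cast_ofNat, sub_add_cancel, Option.some.injEq] at h
  rw [h, show (10 : G) = 7 + 3 by norm_num, sub_add_add_cancel]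

end IsL2211Labeling

lemma Function.Periodic.natCast_gcd_s8 {α : Type*} {d n : ℕ} {f : ZMod d → α}
    (h : Periodic f (n : ZMod d)) : Periodic f (n.gcd d : ZMod d) := by
  have hgcd : ((n.gcd d : ℕ) : ZMod d) = (n.gcdA d : ℤ) * n := by
    rw [← Int.cast_natCast, Nat.gcd_eq_gcd_ab]
    push_cast
    rw [ZMod.natCast_self]
    ring
  rw [hgcd]
  exact h.int_mul _

theorem stmt_8_general (d : ℕ) (c : ZMod d → Fin 7)
    (h1 : ∀ i : ZMod d, (2 : ℤ) ≤ |((c (i + 1) : ℕ) : ℤ) - ((c i : ℕ) : ℤ)|)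
    (h2 : ∀ i : ZMod d, (2 : ℤ) ≤ |((c (i + 2) : ℕ) : ℤ) - ((c i : ℕ) : ℤ)|)
    (h3 : ∀ i : ZMod d, c (i + 3) ≠ c i)
    (h4 : ∀ i : ZMod d, c (i + 4) ≠ c i) :
    7 ∣ d := by
  have h7 : Periodic c ((7 : ℕ) : ZMod d) := by
    exact_mod_cast IsL2211Labeling.periodic ⟨h1, h2, h3, h4⟩
  by_contra h7d
  have hcop : Nat.Coprime 7 d := (Nat.Prime.coprime_iff_not_dvd (by norm_num)).mpr h7d
  have hconst : Periodic c 1 := by simpa [hcop.gcd_eq_one] using h7.natCast_gcd_s8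
  have h10 := h1 0
  rw [hconst 0] at h10
  simp at h10

theorem stmt_8 (d : ℕ) (hd : 5 ≤ d) (c : ZMod d → Fin 7)
    (h1 : ∀ i : ZMod d, (2 : ℤ) ≤ |((c (i + 1) : ℕ) : ℤ) - ((c i : ℕ) : ℤ)|)
    (h2 : ∀ i : ZMod d, (2 : ℤ) ≤ |((c (i + 2) : ℕ) : ℤ) - ((c i : ℕ) : ℤ)|)
    (h3 : ∀ i : ZMod d, c (i + 3) ≠ c i)
    (h4 : ∀ i : ZMod d, c (i + 4) ≠ c i) :
    7 ∣ d :=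
  stmt_8_general d c h1 h2 h3 h4
end

section
/- Let d ≥ 5 and let c : ZMod d → Fin 7 be an L(2,2,1,1)-labeling (|c(i+1)-c(i)| ≥ 2, |c(i+2)-c(i)| ≥ 2, c(i+3) ≠ c(i), c(i+4) ≠ c(i) for all i). Then c uses the color 0 or the color 6, i.e., there exists i with c(i) = 0 or c(i) = 6. -/
/-!
If the colors 0 and 6 are avoided, all colors lie in {1,…,5}. Three consecutive vertices are
pairwise within distance 2, so their colors are pairwise at least 2 apart, which in {1,…,5}
forces them to be 1, 3, 5 in some order. Comparing the windows (i, i+1, i+2) and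
(i+1, i+2, i+3), both summing to 9, gives c(i+3) = c(i), contradicting the distance-3 condition.
-/

lemma add_add_eq_nine_of_two_separated {a b c : ℤ} (ha : 1 ≤ a ∧ a ≤ 5) (hb : 1 ≤ b ∧ b ≤ 5)
    (hc : 1 ≤ c ∧ c ≤ 5) (hab : 2 ≤ |b - a|) (hbc : 2 ≤ |c - b|) (hac : 2 ≤ |c - a|) :
    a + b + c = 9 := by
  rw [le_abs] at hab hbc hac
  omega

lemma apply_add_three_of_two_separated {G : Type*} [AddMonoidWithOne G] (f : G → ℤ)
    (hf : ∀ i, 1 ≤ f i ∧ f i ≤ 5)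
    (h1 : ∀ i, 2 ≤ |f (i + 1) - f i|) (h2 : ∀ i, 2 ≤ |f (i + 2) - f i|) (i : G) :
    f (i + 3) = f i := by
  have hadd₂ : ∀ j : G, j + 1 + 1 = j + 2 := fun j => by rw [add_assoc, one_add_one_eq_two]
  have hadd₃ : ∀ j : G, j + 1 + 2 = j + 3 := fun j => by rw [add_assoc]; norm_num
  have window : ∀ j, f j + f (j + 1) + f (j + 2) = 9 := fun j =>
    add_add_eq_nine_of_two_separated (hf _) (hf _) (hf _) (h1 j) (hadd₂ j ▸ h1 (j + 1)) (h2 j)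
  have := window (i + 1)
  rw [hadd₂, hadd₃] at this
  linarith [window i]

theorem stmt_9_general (d : ℕ) (c : ZMod d → Fin 7)
    (h1 : ∀ i : ZMod d, (2 : ℤ) ≤ |((c (i + 1) : ℕ) : ℤ) - ((c i : ℕ) : ℤ)|)
    (h2 : ∀ i : ZMod d, (2 : ℤ) ≤ |((c (i + 2) : ℕ) : ℤ) - ((c i : ℕ) : ℤ)|)
    (h3 : ∀ i : ZMod d, c (i + 3) ≠ c i) :
    ∃ i : ZMod d, c i = 0 ∨ c i = 6 := by
  by_contra! h
  have hrange : ∀ i, 1 ≤ ((c i : ℕ) : ℤ) ∧ ((c i : ℕ) : ℤ) ≤ 5 := fun i => by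
    have h0 : (c i : ℕ) ≠ 0 := Fin.val_ne_iff.mpr (h i).1
    have h6 : (c i : ℕ) ≠ 6 := Fin.val_ne_iff.mpr (h i).2
    omega
  exact h3 0 (Fin.ext (by exact_mod_cast apply_add_three_of_two_separated _ hrange h1 h2 0))

theorem stmt_9 (d : ℕ) (hd : 5 ≤ d) (c : ZMod d → Fin 7)
    (h1 : ∀ i : ZMod d, (2 : ℤ) ≤ |((c (i + 1) : ℕ) : ℤ) - ((c i : ℕ) : ℤ)|)
    (h2 : ∀ i : ZMod d, (2 : ℤ) ≤ |((c (i + 2) : ℕ) : ℤ) - ((c i : ℕ) : ℤ)|)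
    (h3 : ∀ i : ZMod d, c (i + 3) ≠ c i)
    (h4 : ∀ i : ZMod d, c (i + 4) ≠ c i) :
    ∃ i : ZMod d, c i = 0 ∨ c i = 6 :=
  stmt_9_general d c h1 h2 h3
end

section
/- Let d ≥ 5 and let c : ZMod d → Fin 7 be an L(2,2,1,1)-labeling with c(0) = 0. Then {c(1), c(-1)} = {2, 5}. -/
/-!
The labelling lifts to the path `ℤ` (through `ℤ → ZMod d`) and is symmetric under `i ↦ -i`, so it
suffices to show that a neighbour of a vertex labelled `0` gets `2` or `5`: the two neighbours are
at distance two, hence have different labels. That one-sided claim only involves the labels on the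
window `-3, …, 4`, where it is a finite check.
-/

structure IsL2211Labeling_s10 {G : Type*} [AddGroupWithOne G] (v : G → ℤ) : Prop where
  two_le_abs_sub_one : ∀ i, 2 ≤ |v (i + 1) - v i|
  two_le_abs_sub_two : ∀ i, 2 ≤ |v (i + 2) - v i|
  ne_three : ∀ i, v (i + 3) ≠ v i
  ne_four : ∀ i, v (i + 4) ≠ v i

namespace IsL2211Labeling_s10

theorem comp_intCast {R : Type*} [AddGroupWithOne R] {v : R → ℤ} (hv : IsL2211Labeling_s10 v) :
    IsL2211Labeling_s10 (fun i : ℤ => v i) where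
  two_le_abs_sub_one i := by simpa using hv.two_le_abs_sub_one i
  two_le_abs_sub_two i := by simpa using hv.two_le_abs_sub_two i
  ne_three i := by simpa using hv.ne_three i
  ne_four i := by simpa using hv.ne_four i

theorem comp_neg {G : Type*} [AddCommGroupWithOne G] {v : G → ℤ} (hv : IsL2211Labeling_s10 v) :
    IsL2211Labeling_s10 (fun i => v (-i)) where
  two_le_abs_sub_one i := by
    simpa [abs_sub_comm] using hv.two_le_abs_sub_one (-(i + 1))
  two_le_abs_sub_two i := by
    simpa [abs_sub_comm] using hv.two_le_abs_sub_two (-(i + 2))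
  ne_three i := by simpa [eq_comm] using hv.ne_three (-(i + 3))
  ne_four i := by simpa [eq_comm] using hv.ne_four (-(i + 4))

theorem apply_one_eq_two_or_eq_five {v : ℤ → ℤ} (hv : IsL2211Labeling_s10 v)
    (hrange : ∀ i, 0 ≤ v i ∧ v i ≤ 6) (h0 : v 0 = 0) : v 1 = 2 ∨ v 1 = 5 := by
  have d1 i := le_abs'.1 (hv.two_le_abs_sub_one i)
  have d2 i := le_abs'.1 (hv.two_le_abs_sub_two i)
  have := d1 (-3); have := d1 (-2); have := d1 (-1); have := d1 0; have := d1 1; have := d1 2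
  have := d1 3
  have := d2 (-3); have := d2 (-2); have := d2 (-1); have := d2 0; have := d2 1; have := d2 2
  have := hv.ne_three (-3); have := hv.ne_three (-2); have := hv.ne_three (-1)
  have := hv.ne_three 0; have := hv.ne_three 1
  have := hv.ne_four (-3); have := hv.ne_four (-2); have := hv.ne_four (-1); have := hv.ne_four 0
  have := hrange (-3); have := hrange (-2); have := hrange (-1); have := hrange 1
  have := hrange 2; have := hrange 3; have := hrange 4
  simp only [Int.reduceAdd, Int.reduceNeg] at *
  omega

theorem neighbors_eq_two_five_of_eq_zero {v : ℤ → ℤ} (hv : IsL2211Labeling_s10 v)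
    (hrange : ∀ i, 0 ≤ v i ∧ v i ≤ 6) (h0 : v 0 = 0) :
    (v 1 = 2 ∧ v (-1) = 5) ∨ (v 1 = 5 ∧ v (-1) = 2) := by
  have right := hv.apply_one_eq_two_or_eq_five hrange h0
  have left : v (-1) = 2 ∨ v (-1) = 5 :=
    hv.comp_neg.apply_one_eq_two_or_eq_five (fun i => hrange (-i)) (by simpa using h0)
  have apart := le_abs'.1 (hv.two_le_abs_sub_two (-1))
  norm_num at apart
  omega

end IsL2211Labeling_s10

theorem stmt_10_general (d : ℕ) (c : ZMod d → Fin 7)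
    (h1 : ∀ i : ZMod d, (2 : ℤ) ≤ |((c (i + 1) : ℕ) : ℤ) - ((c i : ℕ) : ℤ)|)
    (h2 : ∀ i : ZMod d, (2 : ℤ) ≤ |((c (i + 2) : ℕ) : ℤ) - ((c i : ℕ) : ℤ)|)
    (h3 : ∀ i : ZMod d, c (i + 3) ≠ c i)
    (h4 : ∀ i : ZMod d, c (i + 4) ≠ c i)
    (h0 : c 0 = 0) :
    (c 1 = 2 ∧ c (-1) = 5) ∨ (c 1 = 5 ∧ c (-1) = 2) := by
  have hv : IsL2211Labeling_s10 fun i => ((c i : ℕ) : ℤ) :=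
    ⟨h1, h2, fun i => by exact_mod_cast Fin.val_injective.ne (h3 i),
      fun i => by exact_mod_cast Fin.val_injective.ne (h4 i)⟩
  have hrange (i : ℤ) : 0 ≤ ((c i : ℕ) : ℤ) ∧ ((c i : ℕ) : ℤ) ≤ 6 := by
    have := (c i).isLt
    omega
  have key := hv.comp_intCast.neighbors_eq_two_five_of_eq_zero hrange (by simp [h0])
  simp only [Int.cast_one, Int.cast_neg] at key
  simp only [Fin.ext_iff]
  exact_mod_cast key

theorem stmt_10 (d : ℕ) (hd : 5 ≤ d) (c : ZMod d → Fin 7)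
    (h1 : ∀ i : ZMod d, (2 : ℤ) ≤ |((c (i + 1) : ℕ) : ℤ) - ((c i : ℕ) : ℤ)|)
    (h2 : ∀ i : ZMod d, (2 : ℤ) ≤ |((c (i + 2) : ℕ) : ℤ) - ((c i : ℕ) : ℤ)|)
    (h3 : ∀ i : ZMod d, c (i + 3) ≠ c i)
    (h4 : ∀ i : ZMod d, c (i + 4) ≠ c i)
    (h0 : c 0 = 0) :
    (c 1 = 2 ∧ c (-1) = 5) ∨ (c 1 = 5 ∧ c (-1) = 2) :=
  stmt_10_general d c h1 h2 h3 h4 h0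
end

section
/- Let d ≥ 5 and let c : ZMod d → Fin 7 be an L(2,2,1,1)-labeling with c(0) = 0, c(1) = 5, c(-1) = 2. Then c(2) = 3, c(3) = 1, c(4) = 6, c(5) = 4, c(6) = 2, and c(7) = 0. -/
/-!
Pull the labeling back to the integer sequence `f n = c n`. Around a vertex coloured `0`, a finite
case check on a window of seven consecutive vertices shows that the left neighbour is coloured
`2` or `5`. Starting from `2, 0, 5`, every later colour is then forced by its four predecessors:
the constraints leave a single value at each of the positions `2, …, 5`, and at position `6`
they leave `0` or `2`, where `0` is excluded because its left neighbour would be coloured `4`.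
-/

structure IsL2211Labeling_s11 (f : ℤ → ℤ) : Prop where
  bounded : ∀ n, 0 ≤ f n ∧ f n ≤ 6
  two_le_abs_sub_one : ∀ n, 2 ≤ |f (n + 1) - f n|
  two_le_abs_sub_two : ∀ n, 2 ≤ |f (n + 2) - f n|
  ne_three : ∀ n, f (n + 3) ≠ f n
  ne_four : ∀ n, f (n + 4) ≠ f n

theorem isL2211Labeling_comp_intCast {G : Type*} [AddGroupWithOne G] (c : G → Fin 7)
    (h1 : ∀ i : G, (2 : ℤ) ≤ |((c (i + 1) : ℕ) : ℤ) - ((c i : ℕ) : ℤ)|)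
    (h2 : ∀ i : G, (2 : ℤ) ≤ |((c (i + 2) : ℕ) : ℤ) - ((c i : ℕ) : ℤ)|)
    (h3 : ∀ i : G, c (i + 3) ≠ c i) (h4 : ∀ i : G, c (i + 4) ≠ c i) :
    IsL2211Labeling_s11 (fun n : ℤ => ((c n : ℕ) : ℤ)) where
  bounded n := by have := (c n).isLt; omega
  two_le_abs_sub_one n := by simpa using h1 n
  two_le_abs_sub_two n := by simpa using h2 n
  ne_three n := by simpa [Fin.val_inj] using h3 n
  ne_four n := by simpa [Fin.val_inj] using h4 n

namespace IsL2211Labeling_s11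

variable {f : ℤ → ℤ}

theorem add_two_le_or_add_two_le (hf : IsL2211Labeling_s11 f) (m n : ℤ)
    (h : m < n ∧ n ≤ m + 2 := by omega) : f n + 2 ≤ f m ∨ f m + 2 ≤ f n := by
  obtain rfl | rfl : n = m + 1 ∨ n = m + 2 := by omega
  · have := hf.two_le_abs_sub_one m
    rw [le_abs'] at this
    omega
  · have := hf.two_le_abs_sub_two m
    rw [le_abs'] at this
    omega

theorem ne_of_le_add_four (hf : IsL2211Labeling_s11 f) (m n : ℤ)
    (h : m < n ∧ n ≤ m + 4 := by omega) : f n ≠ f m := by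
  obtain h | rfl | rfl : n ≤ m + 2 ∨ n = m + 3 ∨ n = m + 4 := by omega
  · have := hf.add_two_le_or_add_two_le m n
    omega
  · exact hf.ne_three m
  · exact hf.ne_four m

theorem left_eq_two_or_eq_five_of_eq_zero (hf : IsL2211Labeling_s11 f) {n : ℤ} (h : f (n + 1) = 0) :
    f n = 2 ∨ f n = 5 := by
  -- on `n, …, n + 5` alone the labels `4, 0, 6, 3, 1, 5` are still possible
  have := hf.bounded n
  have := hf.bounded (n + 2)
  have := hf.bounded (n + 3)
  have := hf.bounded (n + 4)
  have := hf.bounded (n + 5)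
  have := hf.bounded (n + 6)
  have := hf.add_two_le_or_add_two_le n (n + 1)
  have := hf.add_two_le_or_add_two_le n (n + 2)
  have := hf.add_two_le_or_add_two_le (n + 1) (n + 2)
  have := hf.add_two_le_or_add_two_le (n + 1) (n + 3)
  have := hf.add_two_le_or_add_two_le (n + 2) (n + 3)
  have := hf.add_two_le_or_add_two_le (n + 2) (n + 4)
  have := hf.add_two_le_or_add_two_le (n + 3) (n + 4)
  have := hf.add_two_le_or_add_two_le (n + 3) (n + 5)
  have := hf.add_two_le_or_add_two_le (n + 4) (n + 5)
  have := hf.add_two_le_or_add_two_le (n + 4) (n + 6)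
  have := hf.add_two_le_or_add_two_le (n + 5) (n + 6)
  have := hf.ne_of_le_add_four n (n + 3)
  have := hf.ne_of_le_add_four n (n + 4)
  have := hf.ne_of_le_add_four (n + 1) (n + 4)
  have := hf.ne_of_le_add_four (n + 1) (n + 5)
  have := hf.ne_of_le_add_four (n + 2) (n + 5)
  have := hf.ne_of_le_add_four (n + 2) (n + 6)
  have := hf.ne_of_le_add_four (n + 3) (n + 6)
  omega

theorem eq_of_eq_two_zero_five (hf : IsL2211Labeling_s11 f)
    (hm1 : f (-1) = 2) (h0 : f 0 = 0) (h1 : f 1 = 5) :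
    f 2 = 3 ∧ f 3 = 1 ∧ f 4 = 6 ∧ f 5 = 4 ∧ f 6 = 2 ∧ f 7 = 0 := by
  have h2 : f 2 = 3 := by
    have := hf.add_two_le_or_add_two_le 1 2
    have := hf.add_two_le_or_add_two_le 0 2
    have := hf.ne_of_le_add_four (-1) 2
    have := hf.bounded 2
    omega
  have h3 : f 3 = 1 := by
    have := hf.add_two_le_or_add_two_le 2 3
    have := hf.add_two_le_or_add_two_le 1 3
    have := hf.ne_of_le_add_four 0 3
    have := hf.bounded 3
    omega
  have h4 : f 4 = 6 := by
    have := hf.add_two_le_or_add_two_le 3 4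
    have := hf.add_two_le_or_add_two_le 2 4
    have := hf.ne_of_le_add_four 1 4
    have := hf.bounded 4
    omega
  have h5 : f 5 = 4 := by
    have := hf.add_two_le_or_add_two_le 4 5
    have := hf.add_two_le_or_add_two_le 3 5
    have := hf.ne_of_le_add_four 2 5
    have := hf.bounded 5
    omega
  have h6 : f 6 = 2 := by
    have := hf.add_two_le_or_add_two_le 5 6
    have := hf.add_two_le_or_add_two_le 4 6
    have := hf.ne_of_le_add_four 3 6
    have := hf.bounded 6
    have : f 6 ≠ 0 := fun h => by
      have := hf.left_eq_two_or_eq_five_of_eq_zero (n := 5) h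
      omega
    omega
  have h7 : f 7 = 0 := by
    have := hf.add_two_le_or_add_two_le 6 7
    have := hf.add_two_le_or_add_two_le 5 7
    have := hf.ne_of_le_add_four 4 7
    have := hf.bounded 7
    omega
  exact ⟨h2, h3, h4, h5, h6, h7⟩

end IsL2211Labeling_s11

theorem stmt_11_general (d : ℕ) (c : ZMod d → Fin 7)
    (h1 : ∀ i : ZMod d, (2 : ℤ) ≤ |((c (i + 1) : ℕ) : ℤ) - ((c i : ℕ) : ℤ)|)
    (h2 : ∀ i : ZMod d, (2 : ℤ) ≤ |((c (i + 2) : ℕ) : ℤ) - ((c i : ℕ) : ℤ)|)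
    (h3 : ∀ i : ZMod d, c (i + 3) ≠ c i)
    (h4 : ∀ i : ZMod d, c (i + 4) ≠ c i)
    (h0 : c 0 = 0) (hp1 : c 1 = 5) (hm1 : c (-1) = 2) :
    c 2 = 3 ∧ c 3 = 1 ∧ c 4 = 6 ∧ c 5 = 4 ∧ c 6 = 2 ∧ c 7 = 0 := by
  have hf := isL2211Labeling_comp_intCast c h1 h2 h3 h4
  obtain ⟨e2, e3, e4, e5, e6, e7⟩ :=
    hf.eq_of_eq_two_zero_five (by simp [hm1]) (by simp [h0]) (by simp [hp1])
  simp only [Int.cast_ofNat] at e2 e3 e4 e5 e6 e7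
  refine ⟨?_, ?_, ?_, ?_, ?_, ?_⟩ <;> ext <;> omega

theorem stmt_11 (d : ℕ) (hd : 5 ≤ d) (c : ZMod d → Fin 7)
    (h1 : ∀ i : ZMod d, (2 : ℤ) ≤ |((c (i + 1) : ℕ) : ℤ) - ((c i : ℕ) : ℤ)|)
    (h2 : ∀ i : ZMod d, (2 : ℤ) ≤ |((c (i + 2) : ℕ) : ℤ) - ((c i : ℕ) : ℤ)|)
    (h3 : ∀ i : ZMod d, c (i + 3) ≠ c i)
    (h4 : ∀ i : ZMod d, c (i + 4) ≠ c i)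
    (h0 : c 0 = 0) (hp1 : c 1 = 5) (hm1 : c (-1) = 2) :
    c 2 = 3 ∧ c 3 = 1 ∧ c 4 = 6 ∧ c 5 = 4 ∧ c 6 = 2 ∧ c 7 = 0 :=
  stmt_11_general d c h1 h2 h3 h4 h0 hp1 hm1
end

section
/- If m, n ≥ 48 and not both m and n are divisible by 7, then there is no 6-L(2,1)-labeling of the strong product C_m ⊠ C_n; hence λ(C_m ⊠ C_n) ≥ 7. -/
/-!
An eight-vertex patch of the grid, checked exhaustively, shows that a labeling with the seven
colours `0, …, 6` is constant on anti-diagonals: `f (x + u) = f (x + v)`. Hence along a row the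
constraints of the labeling become those of an L(2,2,1,1)-labeling of a cycle, and a check of all
such labelings of a path on fourteen vertices shows that they are 7-periodic. A 7-periodic labeling
of the cycle generated by `u` whose neighbours differ is only possible when `7` divides the order
of `u`; this gives `7 ∣ m`, and `7 ∣ n` by symmetry.
-/

def FarApart {k : ℕ} (a b : Fin k) : Prop := a.val + 2 ≤ b.val ∨ b.val + 2 ≤ a.val

instance {k : ℕ} (a b : Fin k) : Decidable (FarApart a b) := by unfold FarApart; infer_instance

theorem farApart_irrefl {k : ℕ} (a : Fin k) : ¬ FarApart a a := by unfold FarApart; omega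

theorem farApart_of_two_le_abs_sub {k : ℕ} {a b : Fin k}
    (h : (2 : ℤ) ≤ |((b : ℕ) : ℤ) - ((a : ℕ) : ℤ)|) : FarApart a b := by
  unfold FarApart
  rcases abs_cases (((b : ℕ) : ℤ) - ((a : ℕ) : ℤ)) with ⟨he, _⟩ | ⟨he, _⟩ <;> omega

structure IsL2211Labeling_s12 {G : Type*} [AddMonoid G] {k : ℕ} (h : G → Fin k) (g : G) : Prop where
  far_one : ∀ x, FarApart (h x) (h (x + g))
  far_two : ∀ x, FarApart (h x) (h (x + g + g))
  ne_three : ∀ x, h (x + g + g + g) ≠ h x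
  ne_four : ∀ x, h (x + g + g + g + g) ≠ h x

def L2211Next (a b c d e : Fin 7) : Prop := e ≠ a ∧ e ≠ b ∧ FarApart c e ∧ FarApart d e

instance (a b c d e : Fin 7) : Decidable (L2211Next a b c d e) := by
  unfold L2211Next; infer_instance

-- Fourteen is the shortest window that forces a repetition at distance seven.
set_option synthInstance.maxSize 5000 in
theorem l2211_window :
    ∀ a₀ a₁ : Fin 7, FarApart a₀ a₁ → ∀ a₂ : Fin 7, FarApart a₀ a₂ → FarApart a₁ a₂ →
    ∀ a₃ : Fin 7, a₃ ≠ a₀ → FarApart a₁ a₃ → FarApart a₂ a₃ →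
    ∀ a₄, L2211Next a₀ a₁ a₂ a₃ a₄ → ∀ a₅, L2211Next a₁ a₂ a₃ a₄ a₅ →
    ∀ a₆, L2211Next a₂ a₃ a₄ a₅ a₆ → ∀ a₇, L2211Next a₃ a₄ a₅ a₆ a₇ →
    ∀ a₈, L2211Next a₄ a₅ a₆ a₇ a₈ → ∀ a₉, L2211Next a₅ a₆ a₇ a₈ a₉ →
    ∀ a₁₀, L2211Next a₆ a₇ a₈ a₉ a₁₀ → ∀ a₁₁, L2211Next a₇ a₈ a₉ a₁₀ a₁₁ →
    ∀ a₁₂, L2211Next a₈ a₉ a₁₀ a₁₁ a₁₂ → ∀ a₁₃, L2211Next a₉ a₁₀ a₁₁ a₁₂ a₁₃ →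
    a₁₀ = a₃ := by
  decide

section

variable {G H : Type*} {k : ℕ}

theorem IsL2211Labeling_s12.comp_add [AddMonoid G] [AddMonoid H] {h : G → Fin k} {g : G}
    (hh : IsL2211Labeling_s12 h g) (x : G) (φ : H →+ G) {g' : H} (hg : φ g' = g) :
    IsL2211Labeling_s12 (fun y => h (x + φ y)) g' where
  far_one y := by simpa [hg, add_assoc] using hh.far_one (x + φ y)
  far_two y := by simpa [hg, add_assoc] using hh.far_two (x + φ y)
  ne_three y := by simpa [hg, add_assoc] using hh.ne_three (x + φ y)
  ne_four y := by simpa [hg, add_assoc] using hh.ne_four (x + φ y)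

theorem IsL2211Labeling_s12.next [AddMonoid G] {h : G → Fin 7} {g : G} (hh : IsL2211Labeling_s12 h g)
    (x : G) : L2211Next (h x) (h (x + g)) (h (x + g + g)) (h (x + g + g + g))
      (h (x + g + g + g + g)) :=
  ⟨hh.ne_four x, hh.ne_three (x + g), hh.far_two (x + g + g), hh.far_one _⟩

theorem IsL2211Labeling_s12.apply_ten_eq_apply_three {h : ℕ → Fin 7} (hh : IsL2211Labeling_s12 h 1) :
    h 10 = h 3 :=
  l2211_window _ _ (hh.far_one 0) _ (hh.far_two 0) (hh.far_one 1) _ (hh.ne_three 0)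
    (hh.far_two 1) (hh.far_one 2) _ (hh.next 0) _ (hh.next 1) _ (hh.next 2) _ (hh.next 3)
    _ (hh.next 4) _ (hh.next 5) _ (hh.next 6) _ (hh.next 7) _ (hh.next 8) _ (hh.next 9)

theorem IsL2211Labeling_s12.periodic [AddCommGroup G] {h : G → Fin 7} {g : G}
    (hh : IsL2211Labeling_s12 h g) : Function.Periodic h (7 • g) := by
  intro x
  have := (hh.comp_add (x - 3 • g) (multiplesHom G g) (by simp)).apply_ten_eq_apply_three
  simp only [multiplesHom_apply] at this
  convert this using 2 <;> abel

theorem IsL2211Labeling_s12.seven_dvd_addOrderOf [AddCommGroup G] {h : G → Fin 7} {g : G}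
    (hh : IsL2211Labeling_s12 h g) : 7 ∣ addOrderOf g := by
  by_contra hg
  obtain ⟨c, hc⟩ := exists_nsmul_eq_self_of_coprime
    ((Nat.Prime.coprime_iff_not_dvd (by norm_num)).mpr hg)
  have := hh.far_one 0
  rw [← hc, hh.periodic.nsmul c 0] at this
  exact farApart_irrefl _ this

structure IsL21Labeling_s12 [AddMonoid G] (f : G → Fin k) (u v : G) : Prop where
  far_u : ∀ x, FarApart (f x) (f (x + u))
  far_v : ∀ x, FarApart (f x) (f (x + v))
  far_uv : ∀ x, FarApart (f x) (f (x + u + v))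
  ne_uu : ∀ x, f (x + u + u) ≠ f x
  ne_vv : ∀ x, f (x + v + v) ≠ f x
  ne_uuv : ∀ x, f (x + u + u + v) ≠ f x
  ne_uvv : ∀ x, f (x + u + v + v) ≠ f x
  ne_uuvv : ∀ x, f (x + u + u + v + v) ≠ f x

-- `aᵢⱼ` is the label of `x + i • u + j • v`.
set_option synthInstance.maxSize 5000 in
theorem l21_patch :
    ∀ a₀₀ a₁₀ : Fin 7, FarApart a₀₀ a₁₀ →
    ∀ a₁₁ : Fin 7, FarApart a₀₀ a₁₁ → FarApart a₁₀ a₁₁ →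
    ∀ a₁₂ : Fin 7, a₁₂ ≠ a₀₀ → a₁₂ ≠ a₁₀ → FarApart a₁₁ a₁₂ →
    ∀ a₂₁ : Fin 7, a₂₁ ≠ a₀₀ → FarApart a₁₀ a₂₁ → FarApart a₁₁ a₂₁ →
    ∀ a₂₂ : Fin 7, a₂₂ ≠ a₀₀ → a₂₂ ≠ a₁₀ → FarApart a₁₁ a₂₂ → FarApart a₁₂ a₂₂ →
      FarApart a₂₁ a₂₂ →
    ∀ a₃₂ : Fin 7, a₃₂ ≠ a₁₀ → a₃₂ ≠ a₁₁ → a₃₂ ≠ a₁₂ → FarApart a₂₁ a₃₂ → FarApart a₂₂ a₃₂ →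
    ∀ a₃₃ : Fin 7, a₃₃ ≠ a₁₁ → a₃₃ ≠ a₁₂ → a₃₃ ≠ a₂₁ → FarApart a₂₂ a₃₃ → FarApart a₃₂ a₃₃ →
    a₂₁ = a₁₂ := by
  decide

theorem IsL21Labeling_s12.comp_add [AddMonoid G] [AddMonoid H] {f : G → Fin k} {u v : G}
    (hf : IsL21Labeling_s12 f u v) (x : G) (φ : H →+ G) {u' v' : H} (hu : φ u' = u)
    (hv : φ v' = v) : IsL21Labeling_s12 (fun y => f (x + φ y)) u' v' where
  far_u y := by simpa [hu, add_assoc] using hf.far_u (x + φ y)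
  far_v y := by simpa [hv, add_assoc] using hf.far_v (x + φ y)
  far_uv y := by simpa [hu, hv, add_assoc] using hf.far_uv (x + φ y)
  ne_uu y := by simpa [hu, add_assoc] using hf.ne_uu (x + φ y)
  ne_vv y := by simpa [hv, add_assoc] using hf.ne_vv (x + φ y)
  ne_uuv y := by simpa [hu, hv, add_assoc] using hf.ne_uuv (x + φ y)
  ne_uvv y := by simpa [hu, hv, add_assoc] using hf.ne_uvv (x + φ y)
  ne_uuvv y := by simpa [hu, hv, add_assoc] using hf.ne_uuvv (x + φ y)

theorem IsL21Labeling_s12.symm [AddCommMonoid G] {f : G → Fin k} {u v : G}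
    (hf : IsL21Labeling_s12 f u v) : IsL21Labeling_s12 f v u where
  far_u := hf.far_v
  far_v := hf.far_u
  far_uv x := by simpa only [add_right_comm x v u] using hf.far_uv x
  ne_uu := hf.ne_vv
  ne_vv := hf.ne_uu
  ne_uuv x := by simpa only [add_right_comm _ v u, add_right_comm x v u] using hf.ne_uvv x
  ne_uvv x := by simpa only [add_right_comm _ v u, add_right_comm x v u] using hf.ne_uuv x
  ne_uuvv x := by
    simpa only [add_right_comm _ v u, add_right_comm x v u] using hf.ne_uuvv x

theorem IsL21Labeling_s12.apply_two_one_eq_apply_one_two {f : ℕ × ℕ → Fin 7}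
    (hf : IsL21Labeling_s12 f (1, 0) (0, 1)) : f (2, 1) = f (1, 2) :=
  l21_patch _ _ (hf.far_u (0, 0)) _ (hf.far_uv (0, 0)) (hf.far_v (1, 0))
    _ (hf.ne_uvv (0, 0)) (hf.ne_vv (1, 0)) (hf.far_v (1, 1))
    _ (hf.ne_uuv (0, 0)) (hf.far_uv (1, 0)) (hf.far_u (1, 1))
    _ (hf.ne_uuvv (0, 0)) (hf.ne_uvv (1, 0)) (hf.far_uv (1, 1)) (hf.far_u (1, 2)) (hf.far_v (2, 1))
    _ (hf.ne_uuvv (1, 0)) (hf.ne_uuv (1, 1)) (hf.ne_uu (1, 2)) (hf.far_uv (2, 1)) (hf.far_u (2, 2))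
    _ (hf.ne_uuvv (1, 1)) (hf.ne_uuv (1, 2)) (hf.ne_uvv (2, 1)) (hf.far_uv (2, 2)) (hf.far_v (3, 2))

theorem IsL21Labeling_s12.apply_add_eq_apply_add [AddCommGroup G] {f : G → Fin 7} {u v : G}
    (hf : IsL21Labeling_s12 f u v) (x : G) : f (x + u) = f (x + v) := by
  have := (hf.comp_add (x - u - v) ((multiplesHom G u).coprod (multiplesHom G v))
    (by simp) (by simp)).apply_two_one_eq_apply_one_two
  simp only [AddMonoidHom.coprod_apply, multiplesHom_apply] at this
  convert this using 2 <;> abel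

theorem IsL21Labeling_s12.isL2211Labeling_left [AddCommGroup G] {f : G → Fin 7} {u v : G}
    (hf : IsL21Labeling_s12 f u v) : IsL2211Labeling_s12 f u := by
  have diag := hf.apply_add_eq_apply_add
  refine ⟨hf.far_u, fun x => ?_, fun x => ?_, fun x => ?_⟩
  · rw [diag]; exact hf.far_uv x
  · calc f (x + u + u + u) = f (x + u + v + v) := by rw [diag, add_right_comm _ u v, diag]
      _ ≠ f x := hf.ne_uvv x
  · calc f (x + u + u + u + u) = f (x + u + u + v + v) := by
          rw [diag, add_right_comm _ u v, diag]
      _ ≠ f x := hf.ne_uuvv x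

end

theorem stmt_12_general (m n : ℕ)
    (h7 : ¬(7 ∣ m ∧ 7 ∣ n)) :
    ¬ ∃ f : ZMod m × ZMod n → Fin 7,
      (∀ i : ZMod m, ∀ j : ZMod n,
        ∀ ab : ZMod m × ZMod n, ab ∈ [((1 : ZMod m), (0 : ZMod n)), (0, 1), (1, 1)] →
          (2 : ℤ) ≤ |((f (i + ab.1, j + ab.2) : ℕ) : ℤ) - ((f (i, j) : ℕ) : ℤ)|) ∧
      (∀ i : ZMod m, ∀ j : ZMod n,
        ∀ ab : ZMod m × ZMod n,
          ab ∈ [((2 : ZMod m), (0 : ZMod n)), (0, 2), (2, 1), (1, 2), (2, 2)] →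
          f (i + ab.1, j + ab.2) ≠ f (i, j)) := by
  rintro ⟨f, hadj, hdist⟩
  have hfar (ab) (hab) (x : ZMod m × ZMod n) : FarApart (f x) (f (x + ab)) :=
    farApart_of_two_le_abs_sub (hadj x.1 x.2 ab hab)
  have hne (ab) (hab) (x : ZMod m × ZMod n) : f (x + ab) ≠ f x := hdist x.1 x.2 ab hab
  have hf : IsL21Labeling_s12 f (1, 0) (0, 1) :=
    { far_u := hfar _ (by simp)
      far_v := hfar _ (by simp)
      far_uv x := by simpa [add_assoc] using hfar (1, 1) (by simp) x
      ne_uu x := by simpa [add_assoc, one_add_one_eq_two] using hne (2, 0) (by simp) x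
      ne_vv x := by simpa [add_assoc, one_add_one_eq_two] using hne (0, 2) (by simp) x
      ne_uuv x := by simpa [add_assoc, one_add_one_eq_two] using hne (2, 1) (by simp) x
      ne_uvv x := by simpa [add_assoc, one_add_one_eq_two] using hne (1, 2) (by simp) x
      ne_uuvv x := by simpa [add_assoc, one_add_one_eq_two] using hne (2, 2) (by simp) x }
  exact h7 ⟨by simpa [Prod.addOrderOf_mk] using hf.isL2211Labeling_left.seven_dvd_addOrderOf,
    by simpa [Prod.addOrderOf_mk] using hf.symm.isL2211Labeling_left.seven_dvd_addOrderOf⟩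

theorem stmt_12 (m n : ℕ) (hm : 48 ≤ m) (hn : 48 ≤ n)
    (h7 : ¬(7 ∣ m ∧ 7 ∣ n)) :
    ¬ ∃ f : ZMod m × ZMod n → Fin 7,
      (∀ i : ZMod m, ∀ j : ZMod n,
        ∀ ab : ZMod m × ZMod n, ab ∈ [((1 : ZMod m), (0 : ZMod n)), (0, 1), (1, 1)] →
          (2 : ℤ) ≤ |((f (i + ab.1, j + ab.2) : ℕ) : ℤ) - ((f (i, j) : ℕ) : ℤ)|) ∧
      (∀ i : ZMod m, ∀ j : ZMod n,
        ∀ ab : ZMod m × ZMod n,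
          ab ∈ [((2 : ZMod m), (0 : ZMod n)), (0, 2), (2, 1), (1, 2), (2, 2)] →
          f (i + ab.1, j + ab.2) ≠ f (i, j)) :=
  stmt_12_general m n h7
end

section
/- Let m ≥ n + 3 ≥ 6 and let f : ZMod m × ZMod n → Fin 5 be a 4-L(2,1)-labeling of C_m □ C_n (hence diagonal: f(i,j) = f(i+1,j-1)). Then the restriction g on ZMod (m-n) × ZMod n defined by g(i,j) = f(i,j) (identifying representatives 1 ≤ i ≤ m-n) is a 4-L(2,1)-labeling of C_{m-n} □ C_n. -/
/-!
Iterating diagonality `f (i, j) = f (i + 1, j - 1)` exactly `n` times returns to the column `j`,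
so every row of `f` is `n`-periodic; as `m = 0` in `ZMod m`, it is then also `(m - n)`-periodic.
Hence `f` is constant on the residue classes mod `m - n`, so reading the representative `i.val`
of `i + 1` or `i + 2` gives the same label as stepping `1` or `2` to the right of `i.val` in
`ZMod m`, and every constraint on `g` is one of the constraints on `f`.
-/

open Function

theorem apply_eq_apply_add_natCast_sub_natCast {R α : Type*} [AddMonoidWithOne R] {n : ℕ}
    {f : R × ZMod n → α} (hdiag : ∀ i j, f (i, j) = f (i + 1, j - 1)) (k : ℕ) (i : R)
    (j : ZMod n) : f (i, j) = f (i + k, j - k) := by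
  induction k generalizing i j with
  | zero => simp
  | succ k ih =>
    rw [ih, hdiag, Nat.cast_succ, Nat.cast_succ, add_assoc, sub_sub]

theorem periodic_fst_of_diagonal {R α : Type*} [AddMonoidWithOne R] {n : ℕ}
    {f : R × ZMod n → α} (hdiag : ∀ i j, f (i, j) = f (i + 1, j - 1)) (j : ZMod n) :
    Periodic (fun i => f (i, j)) (n : R) := fun i => by
  simpa using (apply_eq_apply_add_natCast_sub_natCast hdiag n i j).symm

theorem Function.Periodic.natCast_sub {α : Type*} {m n : ℕ} {φ : ZMod m → α}
    (hφ : Periodic φ (n : ZMod m)) (hnm : n ≤ m) : Periodic φ ((m - n : ℕ) : ZMod m) := by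
  rw [Nat.cast_sub hnm, ZMod.natCast_self, zero_sub]
  exact hφ.neg

theorem Function.Periodic.apply_val_add {R α : Type*} [AddMonoidWithOne R] {p : ℕ} [NeZero p]
    {φ : R → α} (hφ : Periodic φ (p : R)) (i : ZMod p) (k : ℕ) :
    φ ((i + k).val : R) = φ ((i.val : R) + k) := by
  have hnat : Periodic (fun a : ℕ => φ a) p := fun a => by simpa using hφ a
  rw [ZMod.val_add, ZMod.val_natCast, Nat.add_mod_mod, ← Nat.cast_add]
  exact hnat.map_mod_nat _

theorem stmt_15_general (m n : ℕ) (hm : n + 3 ≤ m)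
    (f : ZMod m × ZMod n → Fin 5)
    (h1 : ∀ i : ZMod m, ∀ j : ZMod n,
      (2 : ℤ) ≤ |((f (i + 1, j) : ℕ) : ℤ) - ((f (i, j) : ℕ) : ℤ)|)
    (h2 : ∀ i : ZMod m, ∀ j : ZMod n,
      (2 : ℤ) ≤ |((f (i, j + 1) : ℕ) : ℤ) - ((f (i, j) : ℕ) : ℤ)|)
    (h3 : ∀ i : ZMod m, ∀ j : ZMod n, f (i + 2, j) ≠ f (i, j))
    (h4 : ∀ i : ZMod m, ∀ j : ZMod n, f (i, j + 2) ≠ f (i, j))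
    (h5 : ∀ i : ZMod m, ∀ j : ZMod n, f (i + 1, j + 1) ≠ f (i, j))
    (hdiag : ∀ i : ZMod m, ∀ j : ZMod n, f (i, j) = f (i + 1, j - 1))
    (g : ZMod (m - n) × ZMod n → Fin 5)
    (hg : ∀ i : ZMod (m - n), ∀ j : ZMod n, g (i, j) = f ((i.val : ZMod m), j)) :
    (∀ i : ZMod (m - n), ∀ j : ZMod n,
      (2 : ℤ) ≤ |((g (i + 1, j) : ℕ) : ℤ) - ((g (i, j) : ℕ) : ℤ)|) ∧
    (∀ i : ZMod (m - n), ∀ j : ZMod n,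
      (2 : ℤ) ≤ |((g (i, j + 1) : ℕ) : ℤ) - ((g (i, j) : ℕ) : ℤ)|) ∧
    (∀ i : ZMod (m - n), ∀ j : ZMod n, g (i + 2, j) ≠ g (i, j)) ∧
    (∀ i : ZMod (m - n), ∀ j : ZMod n, g (i, j + 2) ≠ g (i, j)) ∧
    (∀ i : ZMod (m - n), ∀ j : ZMod n, g (i + 1, j + 1) ≠ g (i, j)) := by
  have : NeZero (m - n) := ⟨by omega⟩
  have hshift (k : ℕ) (i : ZMod (m - n)) (j : ZMod n) :
      g (i + k, j) = f ((i.val : ZMod m) + k, j) := by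
    rw [hg]
    exact ((periodic_fst_of_diagonal hdiag j).natCast_sub (by omega)).apply_val_add i k
  have hshift1 (i j) : g (i + 1, j) = f ((i.val : ZMod m) + 1, j) := by simpa using hshift 1 i j
  have hshift2 (i j) : g (i + 2, j) = f ((i.val : ZMod m) + 2, j) := by simpa using hshift 2 i j
  refine ⟨fun i j => ?_, fun i j => ?_, fun i j => ?_, fun i j => ?_, fun i j => ?_⟩
  · rw [hshift1, hg]; exact h1 _ j
  · rw [hg, hg]; exact h2 _ j
  · rw [hshift2, hg]; exact h3 _ j
  · rw [hg, hg]; exact h4 _ j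
  · rw [hshift1, hg]; exact h5 _ j

theorem stmt_15 (m n : ℕ) (hn : 3 ≤ n) (hm : n + 3 ≤ m)
    (f : ZMod m × ZMod n → Fin 5)
    (h1 : ∀ i : ZMod m, ∀ j : ZMod n,
      (2 : ℤ) ≤ |((f (i + 1, j) : ℕ) : ℤ) - ((f (i, j) : ℕ) : ℤ)|)
    (h2 : ∀ i : ZMod m, ∀ j : ZMod n,
      (2 : ℤ) ≤ |((f (i, j + 1) : ℕ) : ℤ) - ((f (i, j) : ℕ) : ℤ)|)
    (h3 : ∀ i : ZMod m, ∀ j : ZMod n, f (i + 2, j) ≠ f (i, j))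
    (h4 : ∀ i : ZMod m, ∀ j : ZMod n, f (i, j + 2) ≠ f (i, j))
    (h5 : ∀ i : ZMod m, ∀ j : ZMod n, f (i + 1, j + 1) ≠ f (i, j))
    (hdiag : ∀ i : ZMod m, ∀ j : ZMod n, f (i, j) = f (i + 1, j - 1))
    (g : ZMod (m - n) × ZMod n → Fin 5)
    (hg : ∀ i : ZMod (m - n), ∀ j : ZMod n, g (i, j) = f ((i.val : ZMod m), j)) :
    (∀ i : ZMod (m - n), ∀ j : ZMod n,
      (2 : ℤ) ≤ |((g (i + 1, j) : ℕ) : ℤ) - ((g (i, j) : ℕ) : ℤ)|) ∧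
    (∀ i : ZMod (m - n), ∀ j : ZMod n,
      (2 : ℤ) ≤ |((g (i, j + 1) : ℕ) : ℤ) - ((g (i, j) : ℕ) : ℤ)|) ∧
    (∀ i : ZMod (m - n), ∀ j : ZMod n, g (i + 2, j) ≠ g (i, j)) ∧
    (∀ i : ZMod (m - n), ∀ j : ZMod n, g (i, j + 2) ≠ g (i, j)) ∧
    (∀ i : ZMod (m - n), ∀ j : ZMod n, g (i + 1, j + 1) ≠ g (i, j)) :=
  stmt_15_general m n hm f h1 h2 h3 h4 h5 hdiag g hg
end

section
/- If 8 divides m (m ≥ 8), then the function f : ZMod m × ZMod m → Fin 8 defined by f(i,j) = g((i.val + j.val) mod 8), where g(r) = 0,2,4,6,1,3,5,7 for r = 0,...,7 respectively, is a 7-L(2,1)-labeling of the strong product C_m ⊠ C_m. -/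
/-!
Since `8 ∣ m`, the residue `(i.val + j.val) % 8` is the image of `i + j` under the ring
homomorphism `ZMod m → ZMod 8`, so `f (i + a, j + b) = g (r + a + b)` with `r` the image of
`i + j`. The adjacent offsets have `a + b ∈ {1, 2}` and the distance-two offsets have
`a + b ∈ {2, 3, 4}`, so both conditions reduce to finitely many checks on `g` over `ZMod 8`.
-/

def stripeLabel : ZMod 8 → Fin 8 := ![0, 2, 4, 6, 1, 3, 5, 7]

theorem stripeLabel_add_gap (r : ZMod 8) {s : ZMod 8} (hs : s = 1 ∨ s = 2) :
    2 ≤ |((stripeLabel (r + s) : ℕ) : ℤ) - ((stripeLabel r : ℕ) : ℤ)| := by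
  rcases hs with rfl | rfl <;> revert r <;> decide

theorem stripeLabel_add_ne (r : ZMod 8) {s : ZMod 8} (hs : s = 2 ∨ s = 3 ∨ s = 4) :
    stripeLabel (r + s) ≠ stripeLabel r := by
  rcases hs with rfl | rfl | rfl <;> revert r <;> decide

theorem ZMod.val_castHom_of_dvd {m n : ℕ} [NeZero m] (h : n ∣ m) (x : ZMod m) :
    (ZMod.castHom h (ZMod n) x).val = x.val % n := by
  rw [castHom_apply, ← natCast_val, val_natCast]

theorem stmt_16 (m : ℕ) (hm : 8 ≤ m) (h8 : 8 ∣ m)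
    (f : ZMod m × ZMod m → Fin 8)
    (hf : ∀ i j : ZMod m,
      f (i, j) = ![(0 : Fin 8), 2, 4, 6, 1, 3, 5, 7]
        ⟨(i.val + j.val) % 8, Nat.mod_lt _ (by norm_num)⟩) :
    (∀ i j : ZMod m,
      ∀ ab : ZMod m × ZMod m, ab ∈ [((1 : ZMod m), (0 : ZMod m)), (0, 1), (1, 1)] →
        (2 : ℤ) ≤ |((f (i + ab.1, j + ab.2) : ℕ) : ℤ) - ((f (i, j) : ℕ) : ℤ)|) ∧
    (∀ i j : ZMod m,
      ∀ ab : ZMod m × ZMod m,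
        ab ∈ [((2 : ZMod m), (0 : ZMod m)), (0, 2), (2, 1), (1, 2), (2, 2)] →
        f (i + ab.1, j + ab.2) ≠ f (i, j)) := by
  have : NeZero m := ⟨by omega⟩
  set φ := ZMod.castHom h8 (ZMod 8)
  have hlabel : ∀ i j : ZMod m, f (i, j) = stripeLabel (φ (i + j)) := fun i j => by
    rw [hf]
    congr 1
    refine Fin.ext (?_ : _ = (φ (i + j)).val)
    rw [ZMod.val_castHom_of_dvd, ZMod.val_add, Nat.mod_mod_of_dvd _ h8]
  have hshift : ∀ i j a b : ZMod m,
      f (i + a, j + b) = stripeLabel (φ (i + j) + (φ a + φ b)) := fun i j a b => by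
    rw [hlabel, ← map_add, ← map_add]
    ring_nf
  refine ⟨fun i j ab hab => ?_, fun i j ab hab => ?_⟩
  · have hs : φ ab.1 + φ ab.2 = 1 ∨ φ ab.1 + φ ab.2 = 2 := by
      fin_cases hab <;> simp only [map_zero, map_one] <;> decide
    rw [hshift, hlabel]
    exact stripeLabel_add_gap _ hs
  · have hs : φ ab.1 + φ ab.2 = 2 ∨ φ ab.1 + φ ab.2 = 3 ∨ φ ab.1 + φ ab.2 = 4 := by
      fin_cases hab <;> simp only [map_zero, map_one, map_ofNat] <;> decide
    rw [hshift, hlabel]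
    exact stripeLabel_add_ne _ hs
end

section
/- For every k ≥ 3, there is no function c : ZMod (k+2) × ZMod k → Fin 7 that is a 6-L(2,1)-labeling of C_{k+2} ⊠ C_k and diagonal (c(i,j) = c(i+1,j-1) for all i,j). -/
/-! Diagonality says `c` is periodic with period `(1, -1)`, hence with period `k • (1, -1)`,
which in `ZMod (k + 2) × ZMod k` is `(-2, 0)`. So `c` takes the same value at two vertices
at distance two, contradicting the L(2,1) condition. -/

theorem ZMod.natCast_eq_neg_two (k : ℕ) : (k : ZMod (k + 2)) = -2 := by
  have h := ZMod.natCast_self (k + 2)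
  push_cast at h
  linear_combination h

theorem ZMod.nsmul_one_neg_one (k : ℕ) :
    k • ((1, -1) : ZMod (k + 2) × ZMod k) = (-2, 0) := by
  simp [ZMod.natCast_eq_neg_two]

theorem stmt_18_general (k : ℕ) :
    ¬ ∃ c : ZMod (k + 2) × ZMod k → Fin 7,
      (∀ i : ZMod (k + 2), ∀ j : ZMod k,
        ∀ ab : ZMod (k + 2) × ZMod k,
          ab ∈ [((1 : ZMod (k + 2)), (0 : ZMod k)), (0, 1), (1, 1)] →
          (2 : ℤ) ≤ |((c (i + ab.1, j + ab.2) : ℕ) : ℤ) - ((c (i, j) : ℕ) : ℤ)|) ∧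
      (∀ i : ZMod (k + 2), ∀ j : ZMod k,
        ∀ ab : ZMod (k + 2) × ZMod k,
          ab ∈ [((2 : ZMod (k + 2)), (0 : ZMod k)), (0, 2), (2, 1), (1, 2), (2, 2)] →
          c (i + ab.1, j + ab.2) ≠ c (i, j)) ∧
      (∀ i : ZMod (k + 2), ∀ j : ZMod k, c (i, j) = c (i + 1, j - 1)) := by
  rintro ⟨c, -, hdist, hdiag⟩
  have hper : Function.Periodic c (1, -1) := fun ⟨i, j⟩ => by
    simpa [sub_eq_add_neg] using (hdiag i j).symm
  have hper_k : Function.Periodic c (-2, 0) := ZMod.nsmul_one_neg_one k ▸ hper.nsmul k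
  exact hdist (-2) 0 (2, 0) (by simp) (by simpa using (hper_k (0, 0)).symm)

theorem stmt_18 (k : ℕ) (hk : 3 ≤ k) :
    ¬ ∃ c : ZMod (k + 2) × ZMod k → Fin 7,
      (∀ i : ZMod (k + 2), ∀ j : ZMod k,
        ∀ ab : ZMod (k + 2) × ZMod k,
          ab ∈ [((1 : ZMod (k + 2)), (0 : ZMod k)), (0, 1), (1, 1)] →
          (2 : ℤ) ≤ |((c (i + ab.1, j + ab.2) : ℕ) : ℤ) - ((c (i, j) : ℕ) : ℤ)|) ∧
      (∀ i : ZMod (k + 2), ∀ j : ZMod k,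
        ∀ ab : ZMod (k + 2) × ZMod k,
          ab ∈ [((2 : ZMod (k + 2)), (0 : ZMod k)), (0, 2), (2, 1), (1, 2), (2, 2)] →
          c (i + ab.1, j + ab.2) ≠ c (i, j)) ∧
      (∀ i : ZMod (k + 2), ∀ j : ZMod k, c (i, j) = c (i + 1, j - 1)) :=
  stmt_18_general k
end

section
/- For every d ≥ 3 divisible by 7, the function c : ZMod d → Fin 7 given by repeating the pattern 0,2,4,6,1,3,5 (i.e., c(i) = pattern[i mod 7]) is an L(2,2,1,1)-labeling: |c(i+1)-c(i)| ≥ 2, |c(i+2)-c(i)| ≥ 2, c(i+3) ≠ c(i), and c(i+4) ≠ c(i) for all i ∈ ZMod d. -/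
/-!
Reduction modulo 7 is a ring homomorphism `ZMod d → ZMod 7`, and `c` factors through it as the
pattern labeling of `ZMod 7`. The four distance conditions are stated through the ring structure, so
they pull back along any ring homomorphism; on `ZMod 7` they are a finite check.
-/

def IsL2211Labeling_s19 {R : Type*} [AddMonoidWithOne R] (c : R → Fin 7) : Prop :=
  (∀ i : R, (2 : ℤ) ≤ |((c (i + 1) : ℕ) : ℤ) - ((c i : ℕ) : ℤ)|) ∧
  (∀ i : R, (2 : ℤ) ≤ |((c (i + 2) : ℕ) : ℤ) - ((c i : ℕ) : ℤ)|) ∧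
  (∀ i : R, c (i + 3) ≠ c i) ∧
  (∀ i : R, c (i + 4) ≠ c i)

theorem IsL2211Labeling_s19.comp_ringHom {R S : Type*} [NonAssocSemiring R] [NonAssocSemiring S]
    {c : S → Fin 7} (hc : IsL2211Labeling_s19 c) (f : R →+* S) : IsL2211Labeling_s19 (c ∘ f) := by
  obtain ⟨h1, h2, h3, h4⟩ := hc
  refine ⟨fun i => ?_, fun i => ?_, fun i => ?_, fun i => ?_⟩ <;>
    simp only [Function.comp_apply, map_add, map_one, map_ofNat]
  exacts [h1 (f i), h2 (f i), h3 (f i), h4 (f i)]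

def sevenCycleLabeling (j : ZMod 7) : Fin 7 :=
  ![0, 2, 4, 6, 1, 3, 5] ⟨j.val, j.val_lt⟩

theorem isL2211Labeling_sevenCycleLabeling : IsL2211Labeling_s19 sevenCycleLabeling := by
  unfold IsL2211Labeling_s19 sevenCycleLabeling
  decide

theorem ZMod.val_castHom {d n : ℕ} [NeZero d] (h : n ∣ d) (i : ZMod d) :
    (ZMod.castHom h (ZMod n) i).val = i.val % n := by
  rw [ZMod.castHom_apply, ZMod.cast_eq_val, ZMod.val_natCast]

theorem stmt_19 (d : ℕ) (hd : 3 ≤ d) (h7 : 7 ∣ d)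
    (c : ZMod d → Fin 7)
    (hc : ∀ i : ZMod d,
      c i = ![(0 : Fin 7), 2, 4, 6, 1, 3, 5] ⟨i.val % 7, Nat.mod_lt _ (by norm_num)⟩) :
    (∀ i : ZMod d, (2 : ℤ) ≤ |((c (i + 1) : ℕ) : ℤ) - ((c i : ℕ) : ℤ)|) ∧
    (∀ i : ZMod d, (2 : ℤ) ≤ |((c (i + 2) : ℕ) : ℤ) - ((c i : ℕ) : ℤ)|) ∧
    (∀ i : ZMod d, c (i + 3) ≠ c i) ∧
    (∀ i : ZMod d, c (i + 4) ≠ c i) := by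
  -- On `ZMod 0 = ℤ`, `val` is `natAbs` and the pattern is mirrored at `0`, so `d ≠ 0` is essential.
  have : NeZero d := ⟨by omega⟩
  have hfactor : c = sevenCycleLabeling ∘ ZMod.castHom h7 (ZMod 7) := by
    funext i
    simp only [hc, Function.comp_apply, sevenCycleLabeling, ZMod.val_castHom]
  rw [hfactor]
  exact isL2211Labeling_sevenCycleLabeling.comp_ringHom _
end
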